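/- Let R be a valuation domain with maximal ideal m and prime ideals p ⊆ q. There is a short exact sequence of R-modules 0 → R_q/p → κ(q) ⊕ κ(p) → R_p/q → 0, where κ(p) = R_p/p and κ(q) = R_q/q are the residue fields, the first map is given by the canonical projection R_q/p → R_q/q and the canonical inclusion R_q/p → R_p/p, and the second map is the difference of the canonical maps. -/

import Mathlib

/-!
Everything lives inside `R_p`: the map `R_q → R_p` is injective, and in a valuation domain a
prime `P` is its own extension to `R_P` (if `a ∈ P` and `s ∉ P`, then `s ∣ a` and `a / s ∈ P`), so
`q R_q = q`, `p R_p = p` and `q R_p = q`. The sequence is then an instance of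
`0 → N/A → N/B ⊕ M/A → M/B → 0` for submodules `A ≤ B ≤ N ≤ M`, which is exact because
`n - m ∈ B ⊆ N` forces `m ∈ N`.
-/

open Function

namespace Submodule

variable {R N M : Type*} [Ring R] [AddCommGroup N] [Module R N] [AddCommGroup M] [Module R M]
  (φ : N →ₗ[R] M) {A B : Submodule R N} {A' B' : Submodule R M}

noncomputable def quotientDiagonal (hAB : A ≤ B) (hA' : A.map φ = A') :
    N ⧸ A →ₗ[R] (N ⧸ B) × (M ⧸ A') :=
  (factor hAB).prod (A.mapQ A' φ (map_le_iff_le_comap.mp hA'.le))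

noncomputable def quotientDifference (hAB : A ≤ B) (hA' : A.map φ = A') (hB' : B.map φ = B') :
    (N ⧸ B) × (M ⧸ A') →ₗ[R] M ⧸ B' :=
  (B.mapQ B' φ (map_le_iff_le_comap.mp hB'.le)).coprod (-factor (hA' ▸ hB' ▸ map_mono hAB))

theorem quotientDiagonal_mk (hAB : A ≤ B) (hA' : A.map φ = A') (x : N) :
    quotientDiagonal φ hAB hA' (Quotient.mk x) = (Quotient.mk x, Quotient.mk (φ x)) :=
  rfl

theorem quotientDifference_mk (hAB : A ≤ B) (hA' : A.map φ = A') (hB' : B.map φ = B') (x : N)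
    (y : M) : quotientDifference φ hAB hA' hB' (Quotient.mk x, Quotient.mk y) =
      Quotient.mk (φ x - y) := by
  rw [Quotient.mk_sub, sub_eq_add_neg]
  rfl

theorem quotientDiagonal_injective (hφ : Injective φ) (hAB : A ≤ B) (hA' : A.map φ = A') :
    Injective (quotientDiagonal φ hAB hA') := by
  refine (injective_iff_map_eq_zero _).mpr fun u hu ↦ ?_
  obtain ⟨x, rfl⟩ := Quotient.mk_surjective A u
  have hx : φ x ∈ A.map φ := hA' ▸ (Quotient.mk_eq_zero A').mp (congrArg Prod.snd hu)
  obtain ⟨a, ha, hax⟩ := hx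
  exact (Quotient.mk_eq_zero A).mpr (hφ hax ▸ ha)

theorem exact_quotientDiagonal_quotientDifference (hAB : A ≤ B) (hA' : A.map φ = A')
    (hB' : B.map φ = B') :
    Exact (quotientDiagonal φ hAB hA') (quotientDifference φ hAB hA' hB') := by
  rintro ⟨u, v⟩
  obtain ⟨x, rfl⟩ := Quotient.mk_surjective B u
  obtain ⟨y, rfl⟩ := Quotient.mk_surjective A' v
  refine ⟨fun h ↦ ?_, ?_⟩
  · rw [quotientDifference_mk, Quotient.mk_eq_zero, ← hB'] at h
    obtain ⟨b, hb, hby⟩ := h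
    refine ⟨Quotient.mk (x - b), ?_⟩
    rw [quotientDiagonal_mk, map_sub, hby, sub_sub_cancel, Prod.mk.injEq, Quotient.eq]
    exact ⟨by simpa using neg_mem hb, rfl⟩
  · rintro ⟨w, hw⟩
    obtain ⟨n, rfl⟩ := Quotient.mk_surjective A w
    rw [← hw, quotientDiagonal_mk, quotientDifference_mk, sub_self, Quotient.mk_zero]

theorem quotientDifference_surjective (hAB : A ≤ B) (hA' : A.map φ = A') (hB' : B.map φ = B') :
    Surjective (quotientDifference φ hAB hA' hB') := by
  intro w
  obtain ⟨y, rfl⟩ := Quotient.mk_surjective B' w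
  refine ⟨(Quotient.mk 0, Quotient.mk (-y)), ?_⟩
  rw [quotientDifference_mk, map_zero, zero_sub, neg_neg]

end Submodule

theorem PreValuationRing.restrictScalars_map_algebraMap_atPrime {R : Type*} [CommRing R]
    [PreValuationRing R] (S : Type*) [CommRing S] [Algebra R S] (P : Ideal R) [P.IsPrime]
    [IsLocalization.AtPrime S P] :
    (P.map (algebraMap R S)).restrictScalars R = Submodule.map (Algebra.linearMap R S) P := by
  refine le_antisymm (fun z hz ↦ ?_) (Submodule.map_le_iff_le_comap.mpr
    fun a ha ↦ Ideal.mem_map_of_mem _ ha)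
  obtain ⟨⟨⟨a, ha⟩, s⟩, h⟩ := (IsLocalization.mem_map_algebraMap_iff P.primeCompl S).mp hz
  rcases ValuationRing.dvd_total (s : R) a with ⟨b, rfl⟩ | ⟨c, hc⟩
  · refine ⟨b, (‹P.IsPrime›.mem_or_mem ha).resolve_left s.2, ?_⟩
    refine (IsLocalization.map_units S s).mul_left_cancel ?_
    rw [Algebra.linearMap_apply, ← map_mul]
    exact h.symm.trans (mul_comm _ _)
  · exact absurd (hc ▸ P.mul_mem_right c ha) s.2

namespace Localization.AtPrime

variable {R : Type*} [CommRing R] {p q : Ideal R} [p.IsPrime] [q.IsPrime]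

theorem primeCompl_le_comap_primeCompl (hpq : p ≤ q) :
    q.primeCompl ≤ p.primeCompl.comap (RingHom.id R) :=
  fun _ hx hxp ↦ hx (hpq hxp)

noncomputable def mapOfLE (hpq : p ≤ q) :
    Localization.AtPrime q →ₐ[R] Localization.AtPrime p :=
  { IsLocalization.map (Localization.AtPrime p) (RingHom.id R)
      (primeCompl_le_comap_primeCompl hpq) with
    commutes' := IsLocalization.map_eq _ }

theorem mapOfLE_injective [IsDomain R] (hpq : p ≤ q) : Injective (mapOfLE hpq) :=
  IsLocalization.map_injective_of_injective' q.primeCompl _ _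
    (primeCompl_le_comap_primeCompl hpq) (fun h ↦ Ideal.mem_primeCompl_iff.mp h p.zero_mem)
    injective_id

end Localization.AtPrime

/-- Over a valuation domain with primes `p ⊆ q`, there is a short exact sequence
`0 → R_q/p → κ(q) ⊕ κ(p) → R_p/q → 0`, where the first map is given by the canonical
projection and the canonical inclusion, and the second map is the difference of the
canonical maps. -/
theorem exact_seq_loc_quot_residue
    {R : Type} [CommRing R] [IsDomain R]
    (hchain : ∀ I J : Ideal R, I ≤ J ∨ J ≤ I)
    (p q : Ideal R) (hp : p.IsPrime) (hq : q.IsPrime) (hpq : p ≤ q) :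
    ∃ (f : ((Localization.AtPrime q) ⧸
              Submodule.map (Algebra.linearMap R (Localization.AtPrime q)) p) →ₗ[R]
           (((Localization.AtPrime q) ⧸
              (Ideal.map (algebraMap R (Localization.AtPrime q)) q).restrictScalars R) ×
            ((Localization.AtPrime p) ⧸
              (Ideal.map (algebraMap R (Localization.AtPrime p)) p).restrictScalars R)))
      (g : (((Localization.AtPrime q) ⧸
              (Ideal.map (algebraMap R (Localization.AtPrime q)) q).restrictScalars R) ×
            ((Localization.AtPrime p) ⧸
              (Ideal.map (algebraMap R (Localization.AtPrime p)) p).restrictScalars R)) →ₗ[R]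
           ((Localization.AtPrime p) ⧸
              Submodule.map (Algebra.linearMap R (Localization.AtPrime p)) q)),
      Function.Injective f ∧ Function.Exact f g ∧ Function.Surjective g ∧
      (∀ x : Localization.AtPrime q,
        f (Submodule.Quotient.mk x) =
          (Submodule.Quotient.mk x,
           Submodule.Quotient.mk
             (IsLocalization.map (M := q.primeCompl) (T := p.primeCompl)
               (S := Localization.AtPrime q) (Localization.AtPrime p) (RingHom.id R)
               (by intro x hx; simp only [Submonoid.mem_comap, RingHom.id_apply]
                   exact fun hmem => hx (hpq hmem)) x))) ∧
      (∀ (x : Localization.AtPrime q) (y : Localization.AtPrime p),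
        g (Submodule.Quotient.mk x, Submodule.Quotient.mk y) =
          Submodule.Quotient.mk
            (IsLocalization.map (M := q.primeCompl) (T := p.primeCompl)
              (S := Localization.AtPrime q) (Localization.AtPrime p) (RingHom.id R)
              (by intro x hx; simp only [Submonoid.mem_comap, RingHom.id_apply]
                  exact fun hmem => hx (hpq hmem)) x) -
          Submodule.Quotient.mk y) := by
  have : PreValuationRing R := PreValuationRing.iff_ideal_total.mpr ⟨hchain⟩
  let φ := (Localization.AtPrime.mapOfLE hpq).toLinearMap
  have hφ (I : Ideal R) :
      Submodule.map φ (Submodule.map (Algebra.linearMap R (Localization.AtPrime q)) I) =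
        Submodule.map (Algebra.linearMap R (Localization.AtPrime p)) I := by
    rw [← Submodule.map_comp]
    exact congrArg (Submodule.map · I) (LinearMap.ext (Localization.AtPrime.mapOfLE hpq).commutes)
  have hextq :=
    PreValuationRing.restrictScalars_map_algebraMap_atPrime (Localization.AtPrime q) q
  have hextp :=
    PreValuationRing.restrictScalars_map_algebraMap_atPrime (Localization.AtPrime p) p
  have hAB := hextq ▸ Submodule.map_mono hpq
  have hA' := hextp ▸ hφ p
  have hB' := hextq ▸ hφ q
  exact ⟨Submodule.quotientDiagonal φ hAB hA', Submodule.quotientDifference φ hAB hA' hB',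
    Submodule.quotientDiagonal_injective φ (Localization.AtPrime.mapOfLE_injective hpq) hAB hA',
    Submodule.exact_quotientDiagonal_quotientDifference φ hAB hA' hB',
    Submodule.quotientDifference_surjective φ hAB hA' hB',
    Submodule.quotientDiagonal_mk φ hAB hA', Submodule.quotientDifference_mk φ hAB hA' hB'⟩
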